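/- arXiv:0809.2626 — 5 statements merged into one kernel-verified Lean document; each statement's English description precedes it below -/
import Mathlib

section
/- Let F be a directed k-uniform hypergraph with edge set of size |F|, let G be a directed k-uniform hypergraph on a finite vertex set V, and let S ⊆ V^k be a set with t(F, G∖S) = 0. Then there exists a set S' ⊆ V^k that is invariant under the coordinatewise action of Aut(G) on V^k, satisfies |S'| ≤ |F|·|S|, and satisfies t(F, G∖S') = 0. -/
/-!
Average over `Aut(G)`. For `x ∈ V^k` let `n(x)` count the automorphisms `σ` with `σ x ∈ S`.
Then `n` is `Aut(G)`-invariant and `∑ₓ n(x) = |Aut(G)| |S|`, so the set `S'` of those `x` with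
`|F| n(x) ≥ |Aut(G)|` is invariant and has at most `|F| |S|` elements. If `f` were a homomorphism
`F → G ∖ S'`, then no `σ ∘ f` is a homomorphism into `G ∖ S`, so every `σ` sends some edge
`f ∘ e` into `S`; hence `∑_{e ∈ F} n(f ∘ e) ≥ |Aut(G)|` and some `f ∘ e` lies in `S'`.
-/

/-- A map `f : VF → V` is a homomorphism from the directed `k`-uniform hypergraph
`F` (a set of `k`-tuples of vertices of `VF`) to `G` if it maps every edge of `F`
to an edge of `G`. -/
def IsHGHom {k : ℕ} {VF V : Type*} (F : Set (Fin k → VF)) (G : Set (Fin k → V))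
    (f : VF → V) : Prop :=
  ∀ e ∈ F, (f ∘ e) ∈ G

/-- The homomorphism density `t(F,G)`: the probability that a uniformly random map
`VF → V` is a homomorphism from `F` to `G`. -/
noncomputable def homDensity {k : ℕ} {VF V : Type*} [Fintype VF] [Fintype V]
    (F : Set (Fin k → VF)) (G : Set (Fin k → V)) : ℝ :=
  (Set.ncard {f : VF → V | IsHGHom F G f} : ℝ) /
    ((Fintype.card V : ℝ) ^ (Fintype.card VF))

/-- An automorphism of a directed `k`-uniform hypergraph `G` on vertex set `V`:
a bijective map `V → V` which is a homomorphism from `G` to itself. -/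
def IsAuto {k : ℕ} {V : Type*} (G : Set (Fin k → V)) (π : V → V) : Prop :=
  Function.Bijective π ∧ ∀ e ∈ G, (π ∘ e) ∈ G

open Finset Pointwise

lemma homDensity_eq_zero_iff {k : ℕ} {VF V : Type*} [Fintype VF] [Fintype V]
    (F : Set (Fin k → VF)) (G : Set (Fin k → V)) :
    homDensity F G = 0 ↔ ∀ f : VF → V, ¬ IsHGHom F G f := by
  rw [homDensity, div_eq_zero_iff, Nat.cast_eq_zero, Set.ncard_eq_zero (Set.toFinite _),
    Set.eq_empty_iff_forall_notMem]
  refine or_iff_left_of_imp fun h f _ => ?_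
  obtain ⟨hV, hVF⟩ := pow_eq_zero_iff'.1 h
  have : IsEmpty V := Fintype.card_eq_zero_iff.1 (by exact_mod_cast hV)
  have : Nonempty VF := Fintype.card_pos_iff.1 (Nat.pos_of_ne_zero hVF)
  exact isEmptyElim (f (Classical.arbitrary VF))

lemma Set.Finite.smul_set_eq_of_smul_set_subset {M α : Type*} [Group M] [MulAction M α]
    {s : Set α} (hs : s.Finite) {g : M} (h : g • s ⊆ s) : g • s = s :=
  Set.eq_of_subset_of_ncard_le h (Set.ncard_smul_set g s).ge hs

section HitCount

variable (H : Type*) {X : Type*} [Group H] [Fintype H] [MulAction H X] [DecidableEq X]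

def hitCount (S : Finset X) (x : X) : ℕ := #{h : H | h • x ∈ S}

def heavySet [Fintype X] (S : Finset X) (m : ℕ) : Finset X :=
  {x | Fintype.card H ≤ m * hitCount H S x}

variable {H}

lemma hitCount_smul (S : Finset X) (g : H) (x : X) : hitCount H S (g • x) = hitCount H S x :=
  card_nbij' (· * g) (· * g⁻¹) (fun h hh => by simpa [mul_smul] using hh)
    (fun h hh => by simpa [mul_smul] using hh) (fun h _ => by simp) (fun h _ => by simp)

variable [Fintype X]

lemma sum_hitCount (S : Finset X) : ∑ x, hitCount H S x = Fintype.card H * #S := by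
  simp_rw [hitCount, card_filter]
  rw [sum_comm]
  refine (sum_congr rfl fun h _ => ?_).trans (sum_const_nat fun _ _ => rfl)
  exact (Equiv.sum_comp (MulAction.toPerm h) fun y => if y ∈ S then 1 else 0).trans (by simp)

lemma smul_mem_heavySet_iff (S : Finset X) (m : ℕ) (g : H) (x : X) :
    g • x ∈ heavySet H S m ↔ x ∈ heavySet H S m := by
  simp [heavySet, hitCount_smul]

lemma card_heavySet_le (S : Finset X) (m : ℕ) : #(heavySet H S m) ≤ m * #S := by
  refine le_of_mul_le_mul_left ?_ (Fintype.card_pos (α := H))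
  calc Fintype.card H * #(heavySet H S m)
      = ∑ _x ∈ heavySet H S m, Fintype.card H := by rw [sum_const, smul_eq_mul, mul_comm]
    _ ≤ ∑ x ∈ heavySet H S m, m * hitCount H S x := sum_le_sum fun x hx => (mem_filter.1 hx).2
    _ ≤ m * ∑ x, hitCount H S x := by
      rw [← mul_sum]; exact Nat.mul_le_mul_left _ (sum_le_sum_of_subset (subset_univ _))
    _ = Fintype.card H * (m * #S) := by rw [sum_hitCount]; ring

lemma exists_mem_heavySet {ι : Type*} (S : Finset X) (T : Finset ι) (p : ι → X)
    (hcover : ∀ h : H, ∃ i ∈ T, h • p i ∈ S) : ∃ i ∈ T, p i ∈ heavySet H S #T := by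
  classical
  have hcard : Fintype.card H ≤ ∑ i ∈ T, hitCount H S (p i) :=
    calc Fintype.card H ≤ #(T.biUnion fun i => {h : H | h • p i ∈ S}) :=
          card_le_card fun h _ => by simpa using hcover h
      _ ≤ _ := card_biUnion_le
  obtain ⟨i, hi, -⟩ := hcover 1
  obtain ⟨i, hi, hle⟩ := exists_le_of_sum_le (f := fun _ => Fintype.card H)
    (g := fun i => #T * hitCount H S (p i)) ⟨i, hi⟩ <| by
      rw [sum_const, smul_eq_mul, ← mul_sum]; exact Nat.mul_le_mul_left _ hcard
  exact ⟨i, hi, mem_filter.2 ⟨mem_univ _, hle⟩⟩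

end HitCount

lemma mem_stabilizer_of_isAuto {k : ℕ} {V : Type*} [Finite V] {G : Set (Fin k → V)} {π : V → V}
    (hπ : IsAuto G π) : Equiv.ofBijective π hπ.1 ∈ MulAction.stabilizer (Equiv.Perm V) G :=
  (Set.toFinite G).smul_set_eq_of_smul_set_subset (Set.smul_set_subset_iff.2 hπ.2)

theorem invariant_blocking_set_general (k : ℕ) (VF V : Type) [Fintype VF] [Fintype V]
    (F : Set (Fin k → VF))
    (G : Set (Fin k → V))
    (S : Set (Fin k → V))
    (hS : homDensity F (G \ S) = 0) :
    ∃ S' : Set (Fin k → V),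
      (∀ π : V → V, IsAuto G π → ∀ x ∈ S', (π ∘ x) ∈ S') ∧
      (S'.ncard : ℝ) ≤ (F.ncard : ℝ) * (S.ncard : ℝ) ∧
      homDensity F (G \ S') = 0 := by
  classical
  let Aut := MulAction.stabilizer (Equiv.Perm V) G
  refine ⟨heavySet Aut S.toFinset #F.toFinset, fun π hπ x hx => ?_, ?_, ?_⟩
  · exact (smul_mem_heavySet_iff _ _ (⟨_, mem_stabilizer_of_isAuto hπ⟩ : Aut) x).2 hx
  · rw [Set.ncard_coe_finset, Set.ncard_eq_toFinset_card' F, Set.ncard_eq_toFinset_card' S]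
    exact_mod_cast card_heavySet_le (H := Aut) S.toFinset #F.toFinset
  rw [homDensity_eq_zero_iff] at hS ⊢
  intro f hf
  have hcover : ∀ σ : Aut, ∃ e ∈ F.toFinset, σ • (f ∘ e) ∈ S.toFinset := by
    intro σ
    obtain ⟨e, he, hσe⟩ : ∃ e ∈ F, (σ.1 ∘ f) ∘ e ∈ G → (σ.1 ∘ f) ∘ e ∈ S := by
      simpa [IsHGHom] using hS (σ.1 ∘ f)
    have hG : σ • (f ∘ e) ∈ G := σ.2 ▸ Set.smul_mem_smul_set (hf e he).1
    exact ⟨e, Set.mem_toFinset.2 he, Set.mem_toFinset.2 (hσe hG)⟩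
  obtain ⟨e, he, hheavy⟩ := exists_mem_heavySet S.toFinset F.toFinset (f ∘ ·) hcover
  exact (hf e (Set.mem_toFinset.1 he)).2 hheavy

/-- If `S ⊆ V^k` satisfies `t(F, G \ S) = 0`, then there is an `Aut(G)`-invariant
set `S' ⊆ V^k` (for the coordinatewise action of `Aut(G)` on `V^k`) with
`|S'| ≤ |F| * |S|` and `t(F, G \ S') = 0`. -/
theorem invariant_blocking_set (k : ℕ) (VF V : Type) [Fintype VF] [Fintype V]
    (F : Set (Fin k → VF)) (hF : ∀ e ∈ F, Function.Injective e)
    (G : Set (Fin k → V)) (hG : ∀ e ∈ G, Function.Injective e)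
    (S : Set (Fin k → V))
    (hS : homDensity F (G \ S) = 0) :
    ∃ S' : Set (Fin k → V),
      (∀ π : V → V, IsAuto G π → ∀ x ∈ S', (π ∘ x) ∈ S') ∧
      (S'.ncard : ℝ) ≤ (F.ncard : ℝ) * (S.ncard : ℝ) ∧
      homDensity F (G \ S') = 0 :=
  invariant_blocking_set_general k VF V F G S hS
end

section
/- Let F be a directed k-uniform hypergraph with edge set of size |F|, let G be a directed k-uniform hypergraph on a finite vertex set V, let S ⊆ V^k, and let S' be the union of those orbits O of the coordinatewise action of Aut(G) on V^k for which |O| ≤ |F|·|O ∩ S|. If f : V(F) → V is a homomorphism from F to G∖S', then there exists π ∈ Aut(G) such that π ∘ f is a homomorphism from F to G∖S. -/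
/-- The orbit of a `k`-tuple `x ∈ V^k` under the coordinatewise action of
`Aut(G)` on `V^k`. -/
def autOrbit {k : ℕ} {V : Type*} (G : Set (Fin k → V)) (x : Fin k → V) :
    Set (Fin k → V) :=
  {y | ∃ π : V → V, IsAuto G π ∧ y = π ∘ x}

/-!
Average over `Aut(G)`. Each point of the orbit `O` of `x` is hit by exactly `|Stab x|`
automorphisms, so the proportion of automorphisms `π` with `π ∘ x ∈ S` is `|O ∩ S| / |O|`.
For an edge `e` of `F`, `f ∘ e ∉ S'` makes this proportion less than `1 / |F|`; a union
bound over the `|F|` edges leaves an automorphism sending no edge into `S`.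
-/

open Pointwise MulAction Finset

theorem MulAction.ncard_setOf_smul_mem {G X : Type*} [Group G] [MulAction G X] (x : X)
    (T : Set X) :
    {g : G | g • x ∈ T}.ncard = Nat.card (stabilizer G x) * (orbit G x ∩ T).ncard := by
  have hpre :
      {g : G | g • x ∈ T} = QuotientGroup.mk ⁻¹' (ofQuotientStabilizer G x ⁻¹' T) := rfl
  have hrange : Set.range (ofQuotientStabilizer G x) = orbit G x := by
    ext y
    constructor
    · rintro ⟨q, rfl⟩
      exact ofQuotientStabilizer_mem_orbit G x q
    · rintro ⟨g, rfl⟩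
      exact ⟨g, rfl⟩
  rw [← Nat.card_coe_set_eq, hpre, QuotientGroup.card_preimage_mk, ← hrange,
    ← Set.image_preimage_eq_range_inter,
    Set.ncard_image_of_injective _ (injective_ofQuotientStabilizer G x), Nat.card_coe_set_eq]

theorem MulAction.mul_ncard_setOf_smul_mem_lt_card {G X : Type*} [Group G] [MulAction G X]
    [Finite G] {x : X} {T : Set X} {n : ℕ}
    (h : n * (orbit G x ∩ T).ncard < (orbit G x).ncard) :
    n * {g : G | g • x ∈ T}.ncard < Nat.card G := by
  have hstab : 0 < Nat.card (stabilizer G x) := Nat.card_pos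
  have hG : Nat.card G = Nat.card (stabilizer G x) * (orbit G x).ncard := by
    simpa using ncard_setOf_smul_mem (G := G) x Set.univ
  rw [ncard_setOf_smul_mem, hG, mul_left_comm]
  exact Nat.mul_lt_mul_of_pos_left h hstab

theorem Finset.sum_lt_of_card_mul_lt {ι : Type*} {s : Finset ι} {f : ι → ℕ} {n : ℕ}
    (hn : 0 < n) (h : ∀ i ∈ s, #s * f i < n) : ∑ i ∈ s, f i < n := by
  rcases s.eq_empty_or_nonempty with rfl | hs
  · simpa using hn
  refine Nat.lt_of_mul_lt_mul_left (a := #s) ?_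
  calc #s * ∑ i ∈ s, f i = ∑ i ∈ s, #s * f i := Finset.mul_sum _ _ _
    _ < ∑ _i ∈ s, n := Finset.sum_lt_sum_of_nonempty hs h
    _ = #s * n := by rw [Finset.sum_const, smul_eq_mul]

theorem exists_forall_notMem_of_sum_ncard_lt {α ι : Type*} [Finite α] {s : Finset ι}
    {B : ι → Set α}
    (h : ∑ i ∈ s, (B i).ncard < Nat.card α) : ∃ a, ∀ i ∈ s, a ∉ B i := by
  by_contra! hcover
  have hunion : Set.univ ⊆ ⋃ i ∈ s, B i := fun a _ => by simpa using hcover a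
  have := calc Nat.card α = (Set.univ : Set α).ncard := Set.ncard_univ α |>.symm
    _ ≤ (⋃ i ∈ s, B i).ncard := Set.ncard_le_ncard hunion
    _ ≤ ∑ i ∈ s, (B i).ncard := s.set_ncard_biUnion_le B
  omega

section Hypergraph

variable {k : ℕ} {V : Type*}

def autGroup (G : Set (Fin k → V)) : Subgroup (Equiv.Perm V) :=
  stabilizer (Equiv.Perm V) G

theorem mem_autGroup_iff [Finite V] {G : Set (Fin k → V)} {σ : Equiv.Perm V} :
    σ ∈ autGroup G ↔ IsAuto G σ := by
  refine ⟨fun hσ => ⟨σ.bijective, fun e he => ?_⟩, fun hσ => ?_⟩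
  · rw [← mem_stabilizer_iff.1 hσ]
    exact Set.smul_mem_smul_set (a := σ) he
  · -- `σ • G ⊆ G` is an equality because `G` is finite and `σ •` is injective.
    have hsub : σ • G ⊆ G := Set.smul_set_subset_iff.2 hσ.2
    exact Set.eq_of_subset_of_ncard_le hsub (Set.ncard_smul_set σ G).ge

theorem isAuto_iff_exists_mem_autGroup [Finite V] {G : Set (Fin k → V)} {π : V → V} :
    IsAuto G π ↔ ∃ σ ∈ autGroup G, ⇑σ = π := by
  refine ⟨fun hπ => ⟨Equiv.ofBijective π hπ.1, mem_autGroup_iff.2 hπ, rfl⟩, ?_⟩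
  rintro ⟨σ, hσ, rfl⟩
  exact mem_autGroup_iff.1 hσ

theorem autOrbit_eq_orbit [Finite V] (G : Set (Fin k → V)) (x : Fin k → V) :
    autOrbit G x = orbit (autGroup G) x := by
  ext y
  simp only [autOrbit, isAuto_iff_exists_mem_autGroup, mem_orbit_iff, Subtype.exists,
    Subgroup.mk_smul]
  constructor
  · rintro ⟨_, ⟨σ, hσ, rfl⟩, rfl⟩
    exact ⟨σ, hσ, rfl⟩
  · rintro ⟨σ, hσ, rfl⟩
    exact ⟨σ, ⟨σ, hσ, rfl⟩, rfl⟩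

end Hypergraph

theorem exists_auto_hom_avoiding_general (k : ℕ) (VF V : Type) [Fintype VF] [Fintype V]
    (F : Set (Fin k → VF))
    (G : Set (Fin k → V))
    (S : Set (Fin k → V))
    (S' : Set (Fin k → V))
    (hS' : S' = {x : Fin k → V |
      (autOrbit G x).ncard ≤ F.ncard * ((autOrbit G x) ∩ S).ncard})
    (f : VF → V) (hf : IsHGHom F (G \ S') f) :
    ∃ π : V → V, IsAuto G π ∧ IsHGHom F (G \ S) (π ∘ f) := by
  classical
  have hbad : ∀ e ∈ F.toFinset,
      #F.toFinset * {σ : autGroup G | σ • (f ∘ e) ∈ S}.ncard < Nat.card (autGroup G) := by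
    intro e he
    have hx : f ∘ e ∉ S' := (hf e (Set.mem_toFinset.1 he)).2
    rw [hS', Set.notMem_ofPred_iff, not_le, autOrbit_eq_orbit, Set.ncard_eq_toFinset_card'] at hx
    exact mul_ncard_setOf_smul_mem_lt_card hx
  obtain ⟨σ, hσ⟩ :=
    exists_forall_notMem_of_sum_ncard_lt (sum_lt_of_card_mul_lt Nat.card_pos hbad)
  have hσG : IsAuto G σ := mem_autGroup_iff.1 σ.2
  exact ⟨σ, hσG, fun e he => ⟨hσG.2 _ (hf e he).1, hσ e (Set.mem_toFinset.2 he)⟩⟩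

/-- Let `S ⊆ V^k` and let `S'` be the union of those orbits `O` of the
coordinatewise action of `Aut(G)` on `V^k` with `|O| ≤ |F| * |O ∩ S|`
(equivalently, the set of tuples whose orbit satisfies this inequality). If
`f : VF → V` is a homomorphism from `F` to `G \ S'`, then there is `π ∈ Aut(G)`
such that `π ∘ f` is a homomorphism from `F` to `G \ S`. -/
theorem exists_auto_hom_avoiding (k : ℕ) (VF V : Type) [Fintype VF] [Fintype V]
    (F : Set (Fin k → VF)) (hF : ∀ e ∈ F, Function.Injective e)
    (G : Set (Fin k → V)) (hG : ∀ e ∈ G, Function.Injective e)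
    (S : Set (Fin k → V))
    (S' : Set (Fin k → V))
    (hS' : S' = {x : Fin k → V |
      (autOrbit G x).ncard ≤ F.ncard * ((autOrbit G x) ∩ S).ncard})
    (f : VF → V) (hf : IsHGHom F (G \ S') f) :
    ∃ π : V → V, IsAuto G π ∧ IsHGHom F (G \ S) (π ∘ f) :=
  exists_auto_hom_avoiding_general k VF V F G S S' hS' f hf
end

section
/- For every ε > 0 there exists δ > 0 such that for every finite group T and every subset S ⊆ T: if the number of triples (a,b,c) ∈ S × S × S with ab = c is at most δ·|T|², then there exists a subset R ⊆ S with |R| ≤ ε·|T| such that the set S∖R contains no triple (a,b,c) with ab = c. -/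
/-!
Green's argument through the triangle removal lemma. In the tripartite graph on three copies of
`T` where `x, y, z` span a triangle iff `x⁻¹ y, y⁻¹ z, x⁻¹ z ∈ S`, every solution `a b = c` gives
the `|T|` edge-disjoint triangles `(x, x a, x c)`, and there are at most `|T|` triangles per
solution. So few solutions means few triangles, and triangle removal yields `o(|T|²)` edges meeting
every triangle. Label an edge by the element of `S` it comes from, and delete from `S` the elements
labelling at least `|T| / 3` of these edges: there are `o(|T|)` of them, and a surviving solution
would have its `|T|` triangles met by fewer than `|T|` edges.
-/

open Finset SimpleGraph SimpleGraph.TripartiteFromTriangles Sum3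

namespace SimpleGraph

variable {V : Type*}

def IsTriangleTransversal (G : SimpleGraph V) (D : Finset (Sym2 V)) : Prop :=
  ∀ ⦃x y z⦄, G.Adj x y → G.Adj x z → G.Adj y z → s(x, y) ∈ D ∨ s(x, z) ∈ D ∨ s(y, z) ∈ D

theorem exists_isTriangleTransversal_of_card_cliqueFinset_lt [Fintype V] [DecidableEq V]
    (G : SimpleGraph V) [DecidableRel G.Adj] {ε : ℝ}
    (hG : #(G.cliqueFinset 3) < triangleRemovalBound ε * Fintype.card V ^ 3) :
    ∃ D : Finset (Sym2 V), (#D : ℝ) < ε * Fintype.card V ^ 2 ∧ G.IsTriangleTransversal D := by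
  obtain ⟨G', hG'G, _, hcard, hfree⟩ := G.triangle_removal hG
  have hsub : G'.edgeFinset ⊆ G.edgeFinset := edgeFinset_mono hG'G
  refine ⟨G.edgeFinset \ G'.edgeFinset, ?_, fun x y z hxy hxz hyz => ?_⟩
  · rw [card_sdiff_of_subset hsub, Nat.cast_sub (card_le_card hsub)]
    exact_mod_cast hcard
  · by_contra! h
    simp only [mem_sdiff, mem_edgeFinset, mem_edgeSet, not_and, not_not] at h
    exact hfree _ (is3Clique_triple_iff.2 ⟨h.1 hxy, h.2.1 hxz, h.2.2 hyz⟩)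

end SimpleGraph

section CayleyGraph

variable {T : Type*} [Group T] [Fintype T]

section Triangles

variable (S : Set T) [DecidablePred (· ∈ S)]

def cayleyTriangles : Finset (T × T × T) :=
  {p | p.1⁻¹ * p.2.1 ∈ S ∧ p.2.1⁻¹ * p.2.2 ∈ S ∧ p.1⁻¹ * p.2.2 ∈ S}

def solutions [DecidableEq T] : Finset (T × T × T) :=
  {p | p.1 ∈ S ∧ p.2.1 ∈ S ∧ p.2.2 ∈ S ∧ p.1 * p.2.1 = p.2.2}

variable {S}

lemma mem_cayleyTriangles {p : T × T × T} :
    p ∈ cayleyTriangles S ↔ p.1⁻¹ * p.2.1 ∈ S ∧ p.2.1⁻¹ * p.2.2 ∈ S ∧ p.1⁻¹ * p.2.2 ∈ S := by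
  simp [cayleyTriangles]

lemma mem_solutions [DecidableEq T] {p : T × T × T} :
    p ∈ solutions S ↔ p.1 ∈ S ∧ p.2.1 ∈ S ∧ p.2.2 ∈ S ∧ p.1 * p.2.1 = p.2.2 := by
  simp [solutions]

variable (S)

lemma card_cayleyTriangles_le [DecidableEq T] :
    #(cayleyTriangles S) ≤ Fintype.card T * #(solutions S) := by
  rw [← card_univ, ← card_product]
  refine card_le_card_of_injOn (fun p => (p.1, p.1⁻¹ * p.2.1, p.2.1⁻¹ * p.2.2, p.1⁻¹ * p.2.2))
    (fun p hp => ?_) (fun p _ q _ h => ?_)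
  · rw [mem_coe, mem_cayleyTriangles] at hp
    simp only [coe_product, coe_univ, Set.mem_prod, Set.mem_univ, true_and, mem_coe,
      mem_solutions]
    exact ⟨hp.1, hp.2.1, hp.2.2, by group⟩
  · simp only [Prod.mk.injEq] at h
    obtain ⟨h₁, h₂, -, h₃⟩ := h
    rw [h₁, mul_right_inj] at h₂ h₃
    exact Prod.ext h₁ (Prod.ext h₂ h₃)

/-- Adjacency of two vertices only depends on them, not on a third vertex, so the graph has no
triangles besides the listed ones. -/
lemma cliqueFinset_graph_cayleyTriangles_subset [DecidableEq T] :
    (graph (cayleyTriangles S)).cliqueFinset 3 ⊆ (cayleyTriangles S).image toTriangle := by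
  intro s hs
  rw [mem_cliqueFinset_iff, is3Clique_iff] at hs
  obtain ⟨x, y, z, hxy, hxz, hyz, rfl⟩ := hs
  obtain ⟨a, b, c, habc, hab, hac, hbc⟩ := graph_triple hxy hxz hyz
  obtain ⟨c', hc'⟩ := Graph.in₀₁_iff.1 hab
  obtain ⟨b', hb'⟩ := Graph.in₀₂_iff.1 hac
  obtain ⟨a', ha'⟩ := Graph.in₁₂_iff.1 hbc
  rw [mem_cayleyTriangles] at ha' hb' hc'
  exact mem_image.2 ⟨(a, b, c), mem_cayleyTriangles.2 ⟨hc'.1, ha'.2.1, hb'.2.2⟩, habc⟩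

lemma card_cliqueFinset_graph_cayleyTriangles_le [DecidableEq T] :
    #((graph (cayleyTriangles S)).cliqueFinset 3) ≤ Fintype.card T * #(solutions S) :=
  (card_le_card (cliqueFinset_graph_cayleyTriangles_subset S)).trans <|
    card_image_le.trans (card_cayleyTriangles_le S)

end Triangles

section Labels

variable {β : Type*} [DecidableEq β]

/-- When `f x y` is the edge between `x` and `y` in two parts of the tripartite graph, this counts
the edges of `D` labelled `a`. -/
def labelCount (D : Finset β) (f : T → T → β) (a : T) : ℕ := #{x | f x (x * a) ∈ D}

lemma sum_labelCount_le (D : Finset β) {f : T → T → β}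
    (hf : ∀ x y x' y', f x y = f x' y' → x = x' ∧ y = y') :
    ∑ a, labelCount D f a ≤ #D := by
  simp only [labelCount]
  rw [← card_sigma]
  refine card_le_card_of_injOn (fun p => f p.2 (p.2 * p.1)) (fun p hp => ?_) ?_
  · simpa using hp
  · rintro ⟨a, x⟩ - ⟨a', x'⟩ - h
    obtain ⟨rfl, h⟩ := hf _ _ _ _ h
    obtain rfl := mul_left_cancel h
    rfl

lemma card_filter_mul_mem_eq_labelCount (D : Finset β) (f : T → T → β) (a b : T) :
    #{x | f (x * a) (x * b) ∈ D} = labelCount D f (a⁻¹ * b) :=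
  card_equiv (Equiv.mulRight a) fun x => by simp [mul_assoc]

end Labels

section Removal

variable [DecidableEq T]

def labelWeight (D : Finset (Sym2 (T ⊕ T ⊕ T))) (a : T) : ℕ :=
  labelCount D (fun x y => s(in₀ x, in₁ y)) a + labelCount D (fun y z => s(in₁ y, in₂ z)) a +
    labelCount D (fun x z => s(in₀ x, in₂ z)) a

lemma sum_labelWeight_le (D : Finset (Sym2 (T ⊕ T ⊕ T))) : ∑ a, labelWeight D a ≤ 3 * #D := by
  have h₀₁ := sum_labelCount_le D (f := fun x y => s(in₀ x, in₁ y)) (by simp [in₀, in₁])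
  have h₁₂ := sum_labelCount_le D (f := fun x y => s(in₁ x, in₂ y)) (by simp [in₁, in₂])
  have h₀₂ := sum_labelCount_le D (f := fun x y => s(in₀ x, in₂ y)) (by simp [in₀, in₂])
  simp only [labelWeight, sum_add_distrib]
  omega

variable {S : Set T} [DecidablePred (· ∈ S)] {D : Finset (Sym2 (T ⊕ T ⊕ T))}

lemma card_le_labelCount_add (hD : (graph (cayleyTriangles S)).IsTriangleTransversal D)
    {a b c : T} (ha : a ∈ S) (hb : b ∈ S) (hc : c ∈ S) (habc : a * b = c) :
    Fintype.card T ≤ labelCount D (fun x y => s(in₀ x, in₁ y)) a +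
      labelCount D (fun y z => s(in₁ y, in₂ z)) b +
        labelCount D (fun x z => s(in₀ x, in₂ z)) c := by
  have hcover (x : T) : s(in₀ x, in₁ (x * a)) ∈ D ∨ s(in₀ x, in₂ (x * c)) ∈ D ∨
      s(in₁ (x * a), in₂ (x * c)) ∈ D := by
    have hx : (x, x * a, x * c) ∈ cayleyTriangles S :=
      mem_cayleyTriangles.2 ⟨by simpa, by simpa [← habc, mul_assoc], by simpa⟩
    exact hD (Rel.in₀₁ hx) (Rel.in₀₂ hx) (Rel.in₁₂ hx)
  have hb' : b = a⁻¹ * c := by rw [← habc, inv_mul_cancel_left]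
  calc Fintype.card T = #(univ : Finset T) := card_univ.symm
    _ ≤ #(({x | s(in₀ x, in₁ (x * a)) ∈ D} : Finset T) ∪
          ({x | s(in₁ (x * a), in₂ (x * c)) ∈ D} : Finset T) ∪
          ({x | s(in₀ x, in₂ (x * c)) ∈ D} : Finset T)) := by
      refine card_le_card fun x _ => ?_
      simp only [mem_union, mem_filter, mem_univ, true_and]
      have := hcover x
      tauto
    _ ≤ _ := (card_union_le _ _).trans (Nat.add_le_add_right (card_union_le _ _) _)
    _ = _ := by rw [hb', ← card_filter_mul_mem_eq_labelCount]; rfl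

theorem exists_removal_of_isTriangleTransversal
    (hD : (graph (cayleyTriangles S)).IsTriangleTransversal D) :
    ∃ R : Finset T, ↑R ⊆ S ∧ Fintype.card T * #R ≤ 9 * #D ∧
      ∀ a ∈ S \ R, ∀ b ∈ S \ R, ∀ c ∈ S \ R, a * b ≠ c := by
  set R : Finset T := {a | a ∈ S ∧ Fintype.card T ≤ 3 * labelWeight D a}
  refine ⟨R, fun a ha => (mem_filter.1 ha).2.1, ?_, ?_⟩
  · calc Fintype.card T * #R = #R • Fintype.card T := by rw [smul_eq_mul, mul_comm]
      _ ≤ ∑ a ∈ R, 3 * labelWeight D a :=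
        card_nsmul_le_sum _ _ _ fun a ha => (mem_filter.1 ha).2.2
      _ ≤ ∑ a, 3 * labelWeight D a := sum_le_sum_of_subset (subset_univ R)
      _ ≤ 9 * #D := by rw [← mul_sum]; linarith [sum_labelWeight_le D]
  · rintro a ⟨ha, haR⟩ b ⟨hb, hbR⟩ c ⟨hc, hcR⟩ habc
    have hlight : ∀ d ∈ S, d ∉ (R : Set T) → 3 * labelWeight D d < Fintype.card T :=
      fun d hd hdR => by simpa [R, hd] using hdR
    have := card_le_labelCount_add hD ha hb hc habc
    have := hlight a ha haR
    have := hlight b hb hbR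
    have := hlight c hc hcR
    simp only [labelWeight] at *
    omega

end Removal

end CayleyGraph

/-- **Removal lemma for the equation `ab = c` in groups** (Green; Kráľ–Serra–Vena).
For every `ε > 0` there is `δ > 0` such that for every finite group `T` and
every `S ⊆ T`: if the number of triples `(a,b,c) ∈ S × S × S` with `a * b = c`
is at most `δ * |T|²`, then one can remove a set `R ⊆ S` of at most `ε * |T|`
elements so that `S \ R` contains no triple `(a,b,c)` with `a * b = c`. -/
theorem group_equation_removal (ε : ℝ) (hε : 0 < ε) :
    ∃ δ : ℝ, 0 < δ ∧
      ∀ (T : Type) [Group T] [Fintype T] (S : Set T),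
        (Nat.card {p : T × T × T //
            p.1 ∈ S ∧ p.2.1 ∈ S ∧ p.2.2 ∈ S ∧ p.1 * p.2.1 = p.2.2} : ℝ)
          ≤ δ * (Fintype.card T : ℝ) ^ 2 →
        ∃ R ⊆ S, (R.ncard : ℝ) ≤ ε * (Fintype.card T : ℝ) ∧
          ∀ a ∈ S \ R, ∀ b ∈ S \ R, ∀ c ∈ S \ R, a * b ≠ c := by
  classical
  -- `81 = 9 * 3 ^ 2`: the graph has `3 |T|` vertices, and removal loses a factor `9`.
  set δ := triangleRemovalBound (ε / 81)
  have hδ : 0 < δ := triangleRemovalBound_pos (by positivity)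
  refine ⟨δ, hδ, fun T _ _ S hS => ?_⟩
  set n := Fintype.card T
  have hn : (0 : ℝ) < n := by exact_mod_cast Fintype.card_pos
  have hV : (Fintype.card (T ⊕ T ⊕ T) : ℝ) = 3 * n := by simp [Fintype.card_sum, n]; ring
  rw [Nat.card_eq_fintype_card, Fintype.card_subtype, ← solutions] at hS
  have htriangles : (#((graph (cayleyTriangles S)).cliqueFinset 3) : ℝ) <
      δ * Fintype.card (T ⊕ T ⊕ T) ^ 3 := by
    have := card_cliqueFinset_graph_cayleyTriangles_le S
    calc (#((graph (cayleyTriangles S)).cliqueFinset 3) : ℝ) ≤ n * #(solutions S) := by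
          exact_mod_cast this
      _ ≤ n * (δ * n ^ 2) := by gcongr
      _ < δ * (3 * n) ^ 3 := by nlinarith [pow_pos hn 3]
      _ = _ := by rw [hV]
  obtain ⟨D, hDcard, hD⟩ := exists_isTriangleTransversal_of_card_cliqueFinset_lt _ htriangles
  obtain ⟨R, hRS, hRcard, hRfree⟩ := exists_removal_of_isTriangleTransversal hD
  refine ⟨R, hRS, ?_, by simpa using hRfree⟩
  rw [Set.ncard_coe_finset]
  have : (n : ℝ) * #R ≤ 9 * #D := by exact_mod_cast hRcard
  rw [hV] at hDcard
  nlinarith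
end

section
/- Let t ≥ 2 be a natural number and A a finite abelian group. Let H be the subgroup of A^t consisting of all (a_1,…,a_t) with Σ_{j=1}^t a_j = 0 and Σ_{j=1}^t (j−1)·a_j = 0. For each i ∈ {1,…,t}, define ψ_i : A^{t−1} → A on the coordinates indexed by {1,…,t}∖{i} by ψ_i((a_j)_{j≠i}) = Σ_{j≠i} (j−i)·a_j. Then ψ_i is a surjective group homomorphism whose kernel is exactly the projection of H to the coordinates in {1,…,t}∖{i}. In particular, A^{t−1}/p_i(H) is isomorphic to A, where p_i(H) denotes this projection. -/
/-
Write `σ(h) = Σ_j h_j` and `μ(h) = Σ_j (j-1)·h_j`, so that `H = ker σ ∩ ker μ`. For any tuple `h`,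
`Σ_{j≠i} (j-i)·h_j = μ(h) - (i-1)·σ(h)`, since the `i`-th term vanishes. Hence `ψ_i` kills the
projection of `H`, and conversely any `a` with `ψ_i(a) = 0` lifts to `H` by setting
`h_i = -Σ_{j≠i} a_j`. Surjectivity holds because one of the neighbours `i ± 1` of `i` exists
when `t ≥ 2`, and its coefficient `±1` is a unit.
-/

/-- The subgroup `H` of `A^t` of tuples `(a_1,…,a_t)` with `Σ_j a_j = 0` and
`Σ_j (j-1)·a_j = 0` (indices `j ∈ Fin t` represent `j+1 ∈ {1,…,t}`, so the
coefficient `j-1` is the natural value of `j : Fin t`). -/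
def Hsub (t : ℕ) (A : Type*) [AddCommGroup A] : AddSubgroup (Fin t → A) where
  carrier := {h | (∑ j : Fin t, h j = 0) ∧ (∑ j : Fin t, ((j : ℕ) : ℤ) • h j = 0)}
  zero_mem' := by simp
  add_mem' := by
    intro a b ha hb
    constructor
    · simp only [Pi.add_apply, Finset.sum_add_distrib, ha.1, hb.1, add_zero]
    · simp only [Pi.add_apply, smul_add, Finset.sum_add_distrib, ha.2, hb.2, add_zero]
  neg_mem' := by
    intro a ha
    constructor
    · simp only [Pi.neg_apply, Finset.sum_neg_distrib, ha.1, neg_zero]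
    · simp only [Pi.neg_apply, smul_neg, Finset.sum_neg_distrib, ha.2, neg_zero]

/-- The projection (restriction) homomorphism `A^t → A^({1,…,t}∖{i})`. -/
def resHom (t : ℕ) (A : Type*) [AddCommGroup A] (i : Fin t) :
    (Fin t → A) →+ ({j : Fin t // j ≠ i} → A) :=
  AddMonoidHom.mk' (fun h => fun j => h j.1) (fun _ _ => rfl)

open Finset

section WeightedSum

variable {ι A : Type*} [Fintype ι] [AddCommGroup A]

def weightedSum (c : ι → ℤ) : (ι → A) →+ A where
  toFun a := ∑ j, c j • a j
  map_zero' := by simp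
  map_add' a b := by simp only [Pi.add_apply, smul_add, sum_add_distrib]

@[simp]
lemma weightedSum_apply (c : ι → ℤ) (a : ι → A) : weightedSum c a = ∑ j, c j • a j := rfl

lemma weightedSum_single [DecidableEq ι] (c : ι → ℤ) (j₀ : ι) (x : A) :
    weightedSum c (Pi.single j₀ x) = c j₀ • x := by
  rw [weightedSum_apply, sum_eq_single j₀ (fun j _ hj => by simp [hj]) (by simp)]
  simp

lemma weightedSum_surjective_of_isUnit (c : ι → ℤ) {j₀ : ι} (hc : IsUnit (c j₀)) :
    Function.Surjective (weightedSum (A := A) c) := by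
  classical
  obtain ⟨u, hu⟩ := hc
  intro x
  refine ⟨Pi.single j₀ ((↑u⁻¹ : ℤ) • x), ?_⟩
  rw [weightedSum_single, ← hu, smul_smul, Units.mul_inv, one_smul]

end WeightedSum

lemma Fin.exists_ne_isUnit_sub {t : ℕ} (ht : 2 ≤ t) (i : Fin t) :
    ∃ j : {j : Fin t // j ≠ i}, IsUnit (((j.1 : ℕ) : ℤ) - (i : ℕ)) := by
  by_cases hi : (i : ℕ) + 1 < t
  · exact ⟨⟨⟨i + 1, hi⟩, Fin.ne_of_val_ne (by simp)⟩, by simp⟩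
  · have hi₁ : 1 ≤ (i : ℕ) := by omega
    refine ⟨⟨⟨i - 1, by omega⟩, Fin.ne_of_val_ne (by simp; omega)⟩, ?_⟩
    simp [Nat.cast_sub hi₁]

section Kernel

variable {t : ℕ} {A : Type*} [AddCommGroup A]

lemma sum_subtype_ne_sub_smul (i : Fin t) (h : Fin t → A) :
    ∑ j : {j : Fin t // j ≠ i}, (((j.1 : ℕ) : ℤ) - (i : ℕ)) • h j
      = ∑ j : Fin t, ((j : ℕ) : ℤ) • h j - ((i : ℕ) : ℤ) • ∑ j, h j := by
  classical
  rw [smul_sum, ← sum_sub_distrib]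
  simp only [← sub_smul]
  rw [Fintype.sum_eq_add_sum_subtype_ne _ i, sub_self, zero_smul, zero_add]

lemma mem_map_resHom_Hsub_iff (i : Fin t) (a : {j : Fin t // j ≠ i} → A) :
    a ∈ (Hsub t A).map (resHom t A i) ↔ ∑ j, (((j.1 : ℕ) : ℤ) - (i : ℕ)) • a j = 0 := by
  classical
  constructor
  · rintro ⟨h, ⟨hσ, hμ⟩, rfl⟩
    exact (sum_subtype_ne_sub_smul i h).trans (by rw [hσ, hμ, smul_zero, sub_zero])
  · intro ha
    set h := (Equiv.funSplitAt i A).symm (-∑ j, a j, a)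
    have hres : resHom t A i h = a := congrArg Prod.snd ((Equiv.funSplitAt i A).apply_symm_apply _)
    have hσ : ∑ j, h j = 0 := by
      rw [Fintype.sum_eq_add_sum_subtype_ne _ i]
      change h i + ∑ j, resHom t A i h j = 0
      rw [hres, show h i = -∑ j, a j by simp [h], neg_add_cancel]
    refine ⟨h, ⟨hσ, ?_⟩, hres⟩
    calc ∑ j : Fin t, ((j : ℕ) : ℤ) • h j
        = ∑ j : {j : Fin t // j ≠ i}, (((j.1 : ℕ) : ℤ) - (i : ℕ)) • h j := by
          rw [sum_subtype_ne_sub_smul, hσ, smul_zero, sub_zero]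
      _ = 0 := by rwa [← hres] at ha

end Kernel

theorem psi_surjective_kernel_projection_general (t : ℕ) (ht : 2 ≤ t)
    (A : Type) [AddCommGroup A] (i : Fin t)
    (ψ : ({j : Fin t // j ≠ i} → A) → A)
    (hψ : ∀ a : {j : Fin t // j ≠ i} → A,
      ψ a = ∑ j : {j : Fin t // j ≠ i}, (((j.1 : ℕ) : ℤ) - ((i : ℕ) : ℤ)) • a j) :
    (∀ x y, ψ (x + y) = ψ x + ψ y) ∧
    Function.Surjective ψ ∧
    (∀ a : {j : Fin t // j ≠ i} → A,
      ψ a = 0 ↔ a ∈ AddSubgroup.map (resHom t A i) (Hsub t A)) ∧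
    Nonempty
      ((({j : Fin t // j ≠ i} → A) ⧸ AddSubgroup.map (resHom t A i) (Hsub t A)) ≃+ A) := by
  set c : {j : Fin t // j ≠ i} → ℤ := fun j => ((j.1 : ℕ) : ℤ) - (i : ℕ)
  obtain rfl : ψ = weightedSum c := funext hψ
  have hker_mem : ∀ a, weightedSum c a = 0 ↔ a ∈ (Hsub t A).map (resHom t A i) :=
    fun a => (mem_map_resHom_Hsub_iff i a).symm
  have hker : (weightedSum c).ker = (Hsub t A).map (resHom t A i) := AddSubgroup.ext hker_mem
  obtain ⟨j, hj⟩ := Fin.exists_ne_isUnit_sub ht i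
  have hsurj := weightedSum_surjective_of_isUnit (A := A) c hj
  exact ⟨map_add _, hsurj, hker_mem,
    ⟨hker ▸ QuotientAddGroup.quotientKerEquivOfSurjective _ hsurj⟩⟩

/-- Let `t ≥ 2`, `A` a finite abelian group, and `ψ_i : A^{t-1} → A` defined on
the coordinates indexed by `{1,…,t} ∖ {i}` by `ψ_i((a_j)_{j≠i}) = Σ_{j≠i} (j-i)·a_j`.
Then `ψ_i` is a surjective group homomorphism whose kernel is exactly the
projection `p_i(H)` of `H = Hsub t A` to the coordinates in `{1,…,t} ∖ {i}`;
in particular `A^{t-1} / p_i(H) ≃ A`. -/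
theorem psi_surjective_kernel_projection (t : ℕ) (ht : 2 ≤ t)
    (A : Type) [AddCommGroup A] [Fintype A] (i : Fin t)
    (ψ : ({j : Fin t // j ≠ i} → A) → A)
    (hψ : ∀ a : {j : Fin t // j ≠ i} → A,
      ψ a = ∑ j : {j : Fin t // j ≠ i}, (((j.1 : ℕ) : ℤ) - ((i : ℕ) : ℤ)) • a j) :
    (∀ x y, ψ (x + y) = ψ x + ψ y) ∧
    Function.Surjective ψ ∧
    (∀ a : {j : Fin t // j ≠ i} → A,
      ψ a = 0 ↔ a ∈ AddSubgroup.map (resHom t A i) (Hsub t A)) ∧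
    Nonempty
      ((({j : Fin t // j ≠ i} → A) ⧸ AddSubgroup.map (resHom t A i) (Hsub t A)) ≃+ A) :=
  psi_surjective_kernel_projection_general t ht A i ψ hψ
end

section
/- Let t ≥ 2 be a natural number, A a finite abelian group, and x_1,…,x_t ∈ A a t-term arithmetic progression (i.e., x_{i+1} − x_i is the same element of A for all 1 ≤ i ≤ t−1). Then the number of tuples (a_1,…,a_t) ∈ A^t satisfying Σ_{j=1}^t (j−i)·a_j = x_i for every i ∈ {1,…,t} is exactly |A|^{t−2}. -/
/-!
Put `S = ∑ⱼ aⱼ` and `T = ∑ⱼ j • aⱼ`; the `i`-th equation reads `T - i • S = xᵢ`. Since the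
progression is `xᵢ = x₀ + i • d` and `t ≥ 2`, the system says exactly `(S, T) = (-d, x₀)`. The map
`a ↦ (S, T)` is a surjective homomorphism `A^t → A²` (the coordinates `a₀, a₁` alone reach
everything), so each of its fibres is a coset of its kernel and has `|A|^t / |A|^2` elements.
-/

open Finset

theorem AddMonoidHom.card_fiber_mul_card_of_surjective {G H : Type*} [AddGroup G] [AddGroup H]
    {f : G →+ H} (hf : Function.Surjective f) (h : H) :
    Nat.card (f ⁻¹' {h}) * Nat.card H = Nat.card G := by
  rw [Nat.card_congr (f.fiberEquivKerOfSurjective hf h), ← AddSubgroup.card_top (G := H),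
    ← f.range_eq_top_of_surjective hf, ← AddSubgroup.index_ker, AddSubgroup.card_mul_index]

theorem Finset.sum_sub_const_zsmul {ι A : Type*} [AddCommGroup A] (s : Finset ι) (w : ι → ℤ)
    (c : ℤ) (a : ι → A) :
    ∑ j ∈ s, (w j - c) • a j = ∑ j ∈ s, w j • a j - c • ∑ j ∈ s, a j := by
  simp only [sub_smul, sum_sub_distrib, smul_sum]

theorem Fin.eq_apply_zero_add_zsmul_of_sub_eq {A : Type*} [AddCommGroup A] {t : ℕ}
    {x : Fin t → A} {d : A}
    (hd : ∀ i : Fin t, ∀ h : (i : ℕ) + 1 < t, x ⟨(i : ℕ) + 1, h⟩ - x i = d) (i : Fin t) :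
    x i = x ⟨0, i.pos⟩ + ((i : ℕ) : ℤ) • d := by
  obtain ⟨n, hn⟩ := i
  induction n with
  | zero => simp
  | succ n ih =>
    have step := hd ⟨n, by omega⟩ hn
    rw [ih (by omega), sub_eq_iff_eq_add'] at step
    rw [step, Nat.cast_succ, add_smul, one_smul, add_assoc]

section Moments

variable (t : ℕ) (A : Type*) [AddCommGroup A]

def momentHom : (Fin t → A) →+ A × A :=
  AddMonoidHom.mk' (fun a => ((∑ j, a j), (∑ j : Fin t, ((j : ℕ) : ℤ) • a j))) fun a b => by
    simp only [Pi.add_apply, smul_add, sum_add_distrib, Prod.mk_add_mk]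

variable {t A}

@[simp]
theorem momentHom_apply (a : Fin t → A) :
    momentHom t A a = ((∑ j, a j), (∑ j : Fin t, ((j : ℕ) : ℤ) • a j)) :=
  rfl

@[simp]
theorem momentHom_single (k : Fin t) (v : A) :
    momentHom t A (Pi.single k v) = (v, ((k : ℕ) : ℤ) • v) := by
  simp [Pi.single_apply]

theorem momentHom_surjective (ht : 2 ≤ t) : Function.Surjective (momentHom t A) := by
  rintro ⟨s, u⟩
  refine ⟨Pi.single ⟨0, by omega⟩ (s - u) + Pi.single ⟨1, by omega⟩ u, ?_⟩
  rw [map_add, momentHom_single, momentHom_single]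
  simp

theorem forall_sum_sub_zsmul_eq_iff_momentHom_eq (ht : 2 ≤ t) {x : Fin t → A} {d : A}
    (hd : ∀ i : Fin t, ∀ h : (i : ℕ) + 1 < t, x ⟨(i : ℕ) + 1, h⟩ - x i = d) (a : Fin t → A) :
    (∀ i : Fin t, ∑ j : Fin t, (((j : ℕ) : ℤ) - ((i : ℕ) : ℤ)) • a j = x i) ↔
      momentHom t A a = (-d, x ⟨0, by omega⟩) := by
  have hx := Fin.eq_apply_zero_add_zsmul_of_sub_eq hd
  simp only [sum_sub_const_zsmul, momentHom_apply, Prod.mk.injEq]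
  constructor
  · intro h
    have h₀ := h ⟨0, by omega⟩
    have h₁ := h ⟨1, by omega⟩
    rw [hx] at h₁
    simp only [Nat.cast_zero, Nat.cast_one, zero_smul, sub_zero, one_smul] at h₀ h₁
    refine ⟨?_, h₀⟩
    rw [h₀] at h₁
    linear_combination (norm := abel) -h₁
  · rintro ⟨hS, hT⟩ i
    rw [hS, hT, hx i, smul_neg]
    abel

end Moments

/-- Let `t ≥ 2`, `A` a finite abelian group, and `x_1, …, x_t ∈ A` a `t`-term
arithmetic progression. Then the number of tuples `(a_1,…,a_t) ∈ A^t` with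
`Σ_j (j-i)·a_j = x_i` for every `i ∈ {1,…,t}` is exactly `|A|^(t-2)`. -/
theorem count_solutions_of_AP (t : ℕ) (ht : 2 ≤ t)
    (A : Type) [AddCommGroup A] [Fintype A] (x : Fin t → A)
    (hx : ∃ d : A, ∀ i : Fin t, ∀ h : (i : ℕ) + 1 < t, x ⟨(i : ℕ) + 1, h⟩ - x i = d) :
    Nat.card {a : Fin t → A //
        ∀ i : Fin t, ∑ j : Fin t, (((j : ℕ) : ℤ) - ((i : ℕ) : ℤ)) • a j = x i}
      = Fintype.card A ^ (t - 2) := by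
  obtain ⟨d, hd⟩ := hx
  have hfiber := (momentHom t A).card_fiber_mul_card_of_surjective (momentHom_surjective ht)
    (-d, x ⟨0, by omega⟩)
  have hpow : Fintype.card A ^ t = Fintype.card A ^ (t - 2) * Fintype.card A ^ 2 := by
    rw [← pow_add, Nat.sub_add_cancel ht]
  rw [Nat.card_prod, Nat.card_fun, Nat.card_eq_fintype_card (α := A), Nat.card_fin, ← sq,
    hpow] at hfiber
  rw [Nat.card_congr (Equiv.subtypeEquivRight (forall_sum_sub_zsmul_eq_iff_momentHom_eq ht hd))]
  exact Nat.eq_of_mul_eq_mul_right (by positivity) hfiber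
end
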